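/- arXiv:math/9903180 — 4 statements merged into one kernel-verified Lean document; each statement's English description precedes it below -/
import Mathlib

section
/- G_Δ is the S(V)-submodule of R_Δ generated by S_Δ; that is, G_Δ is the smallest linear subspace of R_Δ containing all simple fractions φ_σ and stable under all directional derivatives ∂(v), v ∈ V. -/
open Topology Filter
open scoped Classical

noncomputable section

abbrev Vc (r : ℕ) := Fin r → ℂ
abbrev DualV (r : ℕ) := Module.Dual ℂ (Vc r)

/-- The set of regular points: points where no linear form of `Δ` vanishes. -/
def Reg (r : ℕ) (Δ : Finset (DualV r)) : Set (Vc r) := {z | ∀ α ∈ Δ, α z ≠ 0}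

/-- Extension of a function defined on the regular set by `0`. -/
def extendFn (r : ℕ) (Δ : Finset (DualV r)) (f : ↥(Reg r Δ) → ℂ) : Vc r → ℂ :=
  fun w => if h : w ∈ Reg r Δ then f ⟨w, h⟩ else 0

/-- Directional derivative `(∂(v)f)(z) = d/dε f(z+εv)|_{ε=0}`. -/
def Dop (r : ℕ) (Δ : Finset (DualV r)) (v : Vc r) (f : ↥(Reg r Δ) → ℂ) :
    ↥(Reg r Δ) → ℂ :=
  fun z => deriv (fun ε : ℂ => extendFn r Δ f (z.1 + ε • v)) 0

/-- The ring `R_Δ` of rational functions with poles on the hyperplane arrangement: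
generated by the linear forms (hence all polynomial functions) and the inverses of
the elements of `Δ`, viewed as functions on the regular set. -/
def RΔ (r : ℕ) (Δ : Finset (DualV r)) : Subalgebra ℂ (↥(Reg r Δ) → ℂ) :=
  Algebra.adjoin ℂ ({g | ∃ ξ : DualV r, g = fun z => ξ z.1} ∪
    {g | ∃ α ∈ Δ, g = fun z => (α z.1)⁻¹})

/-- The subspace `∂(V)R_Δ` of derivatives. -/
def derivSub (r : ℕ) (Δ : Finset (DualV r)) : Submodule ℂ (↥(Reg r Δ) → ℂ) :=
  Submodule.span ℂ {g | ∃ v : Vc r, ∃ f ∈ RΔ r Δ, g = Dop r Δ v f}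

/-- `σ` is a basis of `Δ`: a subset of `Δ` whose elements form a basis of `V^*`. -/
def IsΔBasis (r : ℕ) (Δ σ : Finset (DualV r)) : Prop :=
  σ ⊆ Δ ∧ LinearIndependent ℂ (fun x : ↥(σ : Set (DualV r)) => (x : DualV r)) ∧
    Submodule.span ℂ (σ : Set (DualV r)) = ⊤

/-- The simple fraction `φ_σ = 1/∏_{α ∈ σ} α`. -/
def phiF (r : ℕ) (Δ σ : Finset (DualV r)) : ↥(Reg r Δ) → ℂ :=
  fun z => (∏ α ∈ σ, α z.1)⁻¹

/-- The space `S_Δ` of simple elements. -/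
def SΔ (r : ℕ) (Δ : Finset (DualV r)) : Submodule ℂ (↥(Reg r Δ) → ℂ) :=
  Submodule.span ℂ {g | ∃ σ, IsΔBasis r Δ σ ∧ g = phiF r Δ σ}

/-- The space `G_Δ`, spanned by the `φ_κ = 1/∏_{α ∈ κ} α` over generating sequences `κ`. -/
def GΔ (r : ℕ) (Δ : Finset (DualV r)) : Submodule ℂ (↥(Reg r Δ) → ℂ) :=
  Submodule.span ℂ {g | ∃ (k : ℕ) (κ : Fin k → DualV r), (∀ i, κ i ∈ Δ) ∧
    Submodule.span ℂ (Set.range κ) = ⊤ ∧ g = fun z => (∏ i, κ i z.1)⁻¹}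

/-- The algebra of polynomial functions, generated by the linear forms. -/
def polyAlg (r : ℕ) (Δ : Finset (DualV r)) : Subalgebra ℂ (↥(Reg r Δ) → ℂ) :=
  Algebra.adjoin ℂ {g | ∃ ξ : DualV r, g = fun z => ξ z.1}

/-- One-variable residue at `0`, defined through the circle integral over small circles. -/
def res0 (g : ℂ → ℂ) : ℂ :=
  limUnder (𝓝[>] (0 : ℝ))
    (fun ε : ℝ => (2 * (Real.pi : ℂ) * Complex.I)⁻¹ * ∮ w in C(0, ε), g w)

/-- Iterated one-variable residues, the innermost residue being taken in the
last variable. -/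
def iterRes : (n : ℕ) → ((Fin n → ℂ) → ℂ) → ℂ
  | 0, F => F (fun i => i.elim0)
  | n + 1, F => res0 (fun z₁ => iterRes n (fun z' => F (Fin.cons z₁ z')))

/-- The iterated residue `Res^{oσ}` with respect to an ordered basis whose dual basis
is `e`: substitute `z = ∑ c_j e_j` (so that the coordinates are `z_j = ⟨α_j, z⟩`) and
take iterated residues. -/
def iterResOB (r : ℕ) (e : Fin r → Vc r) (F : Vc r → ℂ) : ℂ :=
  iterRes r (fun c => F (∑ j, c j • e j))

/-- `e` is the dual basis of the ordered basis `oσ`. -/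
def IsDualFamily (r : ℕ) (oσ : Fin r → DualV r) (e : Fin r → Vc r) : Prop :=
  ∀ i j, oσ i (e j) = (if i = j then 1 else 0)

/-- The simple fraction attached to an ordered basis. -/
def phiO (r : ℕ) (Δ : Finset (DualV r)) (b : Fin r → DualV r) : ↥(Reg r Δ) → ℂ :=
  fun z => (∏ j, b j z.1)⁻¹

/-!
Write `φ_κ` for a generating multiset `κ` of forms of `Δ`. Stability under derivatives is the
formula `∂(v) φ_κ = -∑_{α ∈ κ} α(v) φ_{κ + α}`. Minimality goes by induction on the sum of the
positions of the forms of `κ` in a fixed enumeration of `Δ`. If the distinct forms of `κ` satisfy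
a relation `∑ g x • x = 0`, let `a` be the one of least position with `g a ≠ 0`; partial fractions
give `φ_κ = ∑_{x ≠ a} -(g x / g a) φ_{κ - x + a}`, and each `κ - x + a` is again generating, with
smaller index sum. Otherwise the distinct forms of `κ` are a basis `σ`: without repetitions
`φ_κ = φ_σ`, and a repeated form `α` is produced by differentiating along the vector `v` dual
to `α`, since `∂(v) φ_κ = -(count α κ) φ_{κ + α}`.
-/

open Module

theorem hasDerivAt_inv_prod_affine {𝕜 ι : Type*} [NontriviallyNormedField 𝕜] (m : Multiset ι)
    (a b : ι → 𝕜) (ha : ∀ i ∈ m, a i ≠ 0) :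
    HasDerivAt (fun ε : 𝕜 => ((m.map fun i => a i + ε * b i).prod)⁻¹)
      (-(m.map fun i => b i / a i).sum * ((m.map a).prod)⁻¹) 0 := by
  induction m using Multiset.induction_on with
  | empty => simpa using hasDerivAt_const (0 : 𝕜) (1 : 𝕜)
  | cons i m ih =>
    have hai : a i ≠ 0 := ha i (Multiset.mem_cons_self i m)
    have hi : HasDerivAt (fun ε : 𝕜 => (a i + ε * b i)⁻¹) (-(b i) / a i ^ 2) 0 := by
      have hlin : HasDerivAt (fun ε : 𝕜 => a i + ε * b i) (b i) 0 := by
        simpa using ((hasDerivAt_id (0 : 𝕜)).mul_const (b i)).const_add (a i)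
      refine ((hasDerivAt_inv (by simpa using hai)).comp (0 : 𝕜) hlin).congr_deriv ?_
      simp only [zero_mul, add_zero]
      ring
    have := hi.fun_mul (ih fun j hj => ha j (Multiset.mem_cons_of_mem hj))
    simp only [Multiset.map_cons, Multiset.prod_cons, Multiset.sum_cons, mul_inv, zero_mul,
      add_zero] at this ⊢
    refine this.congr_deriv ?_
    field_simp
    ring

theorem exists_dual_apply_eq_ite {K V : Type*} [Field K] [AddCommGroup V] [Module K V]
    [FiniteDimensional K V] {s : Set (Dual K V)} (hs : LinearIndepOn K id s)
    (hspan : Submodule.span K s = ⊤) {α : Dual K V} (hα : α ∈ s) :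
    ∃ v : V, ∀ β ∈ s, β v = if β = α then 1 else 0 := by
  let b : Basis s K (Dual K V) := .mk hs (by simp [hspan])
  refine ⟨(evalEquiv K V).symm (b.coord ⟨α, hα⟩), fun β hβ => ?_⟩
  have hb : b ⟨β, hβ⟩ = β := by simp [b]
  rw [apply_evalEquiv_symm_apply, ← hb, Basis.coord_apply, Basis.repr_self, Finsupp.single_apply]
  simp [Subtype.ext_iff, eq_comm, hb]

theorem mem_span_erase_of_sum_smul_eq_zero {K V : Type*} [Field K] [AddCommGroup V]
    [Module K V] {s : Finset V} {g : V → K} (hg : ∑ y ∈ s, g y • y = 0) {x : V} (hx : x ∈ s)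
    (hgx : g x ≠ 0) : x ∈ Submodule.span K (s.erase x : Set V) := by
  have hsplit : g x • x = -∑ y ∈ s.erase x, g y • y := by
    rw [eq_neg_iff_add_eq_zero, Finset.add_sum_erase s (fun y => g y • y) hx, hg]
  have hx_eq : (g x)⁻¹ • -∑ y ∈ s.erase x, g y • y = x := by
    rw [← hsplit, smul_smul, inv_mul_cancel₀ hgx, one_smul]
  have hmem : (g x)⁻¹ • -∑ y ∈ s.erase x, g y • y ∈ Submodule.span K (s.erase x : Set V) :=
    Submodule.smul_mem _ _ (neg_mem (Submodule.sum_mem _ fun y hy =>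
      Submodule.smul_mem _ _ (Submodule.subset_span hy)))
  rwa [hx_eq] at hmem

theorem span_setOf_mem_erase_of_sum_smul_eq_zero {K V : Type*} [Field K] [AddCommGroup V]
    [Module K V] {m : Multiset V} {s : Finset V} (hs : ∀ y ∈ s, y ∈ m)
    {g : V → K} (hg : ∑ y ∈ s, g y • y = 0) {x : V} (hx : x ∈ s) (hgx : g x ≠ 0) :
    Submodule.span K {y | y ∈ m.erase x} = Submodule.span K {y | y ∈ m} := by
  refine le_antisymm (Submodule.span_mono fun y => Multiset.mem_of_mem_erase)
    (Submodule.span_le.2 fun y hy => ?_)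
  by_cases hyx : y = x
  · subst hyx
    refine Submodule.span_mono (fun z hz => ?_) (mem_span_erase_of_sum_smul_eq_zero hg hx hgx)
    obtain ⟨hzy, hz⟩ := Finset.mem_erase.1 hz
    exact Multiset.mem_erase_of_ne hzy |>.2 (hs z hz)
  · exact Submodule.subset_span ((Multiset.mem_erase_of_ne hyx).2 hy)

/-- `φ_κ` depends only on the multiset of forms in `κ`, so generating sequences are taken up to
order. -/
def phiM (r : ℕ) (Δ : Finset (DualV r)) (m : Multiset (DualV r)) : ↥(Reg r Δ) → ℂ :=
  fun z => ((m.map fun α => α z.1).prod)⁻¹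

def IsGenerating (r : ℕ) (Δ : Finset (DualV r)) (m : Multiset (DualV r)) : Prop :=
  (∀ α ∈ m, α ∈ Δ) ∧ Submodule.span ℂ {α | α ∈ m} = ⊤

section

variable {r : ℕ} {Δ : Finset (DualV r)}

theorem phiM_map_univ {k : ℕ} (κ : Fin k → DualV r) :
    phiM r Δ (Finset.univ.val.map κ) = fun z => (∏ i, κ i z.1)⁻¹ := by
  funext z
  simp [phiM, Finset.prod_eq_multiset_prod, Function.comp_def]

theorem isGenerating_map_univ_iff {k : ℕ} (κ : Fin k → DualV r) :
    IsGenerating r Δ (Finset.univ.val.map κ) ↔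
      (∀ i, κ i ∈ Δ) ∧ Submodule.span ℂ (Set.range κ) = ⊤ := by
  simp [IsGenerating, Set.range]

theorem GΔ_eq_span_phiM :
    GΔ r Δ = Submodule.span ℂ {g | ∃ m, IsGenerating r Δ m ∧ g = phiM r Δ m} := by
  refine congrArg _ (Set.ext fun g => ⟨?_, ?_⟩)
  · rintro ⟨k, κ, hκΔ, hκspan, rfl⟩
    exact ⟨_, (isGenerating_map_univ_iff κ).2 ⟨hκΔ, hκspan⟩, (phiM_map_univ κ).symm⟩
  · rintro ⟨m, hm, rfl⟩
    obtain ⟨l, rfl⟩ := Quot.exists_rep m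
    have hl : (Quot.mk _ l : Multiset (DualV r)) = Finset.univ.val.map l.get := by
      rw [Fin.univ_val_map, List.ofFn_get]; rfl
    rw [hl] at hm ⊢
    exact ⟨_, _, ((isGenerating_map_univ_iff _).1 hm).1, ((isGenerating_map_univ_iff _).1 hm).2,
      phiM_map_univ _⟩

theorem IsGenerating.cons {m : Multiset (DualV r)} (hm : IsGenerating r Δ m) {α : DualV r}
    (hα : α ∈ Δ) : IsGenerating r Δ (α ::ₘ m) := by
  refine ⟨fun β hβ => ?_, eq_top_iff.2 (hm.2.symm.le.trans (Submodule.span_mono fun β hβ => ?_))⟩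
  · rcases Multiset.mem_cons.1 hβ with rfl | hβ
    exacts [hα, hm.1 β hβ]
  · exact Multiset.mem_cons_of_mem hβ

theorem IsGenerating.cons_erase {m : Multiset (DualV r)} (hm : IsGenerating r Δ m)
    {s : Finset (DualV r)} (hs : ∀ y ∈ s, y ∈ m) {g : DualV r → ℂ} (hg : ∑ y ∈ s, g y • y = 0)
    {x : DualV r} (hx : x ∈ s) (hgx : g x ≠ 0) {a : DualV r} (ha : a ∈ m) :
    IsGenerating r Δ (a ::ₘ m.erase x) := by
  have herase : IsGenerating r Δ (m.erase x) :=
    ⟨fun β hβ => hm.1 β (Multiset.mem_of_mem_erase hβ),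
      (span_setOf_mem_erase_of_sum_smul_eq_zero hs hg hx hgx).trans hm.2⟩
  exact herase.cons (hm.1 a ha)

theorem phiM_mem_GΔ {m : Multiset (DualV r)} (hm : IsGenerating r Δ m) :
    phiM r Δ m ∈ GΔ r Δ := by
  rw [GΔ_eq_span_phiM]
  exact Submodule.subset_span ⟨m, hm, rfl⟩

theorem phiF_eq_phiM (σ : Finset (DualV r)) : phiF r Δ σ = phiM r Δ σ.val := rfl

theorem phiF_mem_GΔ {σ : Finset (DualV r)} (hσ : IsΔBasis r Δ σ) : phiF r Δ σ ∈ GΔ r Δ :=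
  phiM_mem_GΔ ⟨hσ.1, hσ.2.2⟩

theorem phiM_cons (α : DualV r) (m : Multiset (DualV r)) (z : ↥(Reg r Δ)) :
    phiM r Δ (α ::ₘ m) z = (α z.1)⁻¹ * phiM r Δ m z := by
  simp [phiM, mul_comm]

theorem phiM_erase_apply {m : Multiset (DualV r)} (hm : ∀ β ∈ m, β ∈ Δ) {x : DualV r}
    (hx : x ∈ m) (z : ↥(Reg r Δ)) : phiM r Δ (m.erase x) z = x z.1 * phiM r Δ m z := by
  simp only [phiM]
  rw [← Multiset.prod_map_erase (f := fun α => α z.1) hx, mul_inv, ← mul_assoc,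
    mul_inv_cancel₀ (z.2 x (hm x hx)), one_mul]

theorem phiM_eq_sum_of_relation {m : Multiset (DualV r)} (hm : ∀ β ∈ m, β ∈ Δ)
    {s : Finset (DualV r)} (hs : ∀ x ∈ s, x ∈ m) {g : DualV r → ℂ} (hg : ∑ x ∈ s, g x • x = 0)
    {a : DualV r} (ha : a ∈ s) (hga : g a ≠ 0) :
    phiM r Δ m = ∑ x ∈ s.erase a, (-(g x / g a)) • phiM r Δ (a ::ₘ m.erase x) := by
  funext z
  have haz : a z.1 ≠ 0 := z.2 a (hm a (hs a ha))
  have hrel : ∑ x ∈ s.erase a, g x * x z.1 = -(g a * a z.1) := by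
    have hgz := LinearMap.congr_fun hg z.1
    rw [← Finset.add_sum_erase s _ ha] at hgz
    simp only [LinearMap.add_apply, LinearMap.coe_sum, LinearMap.coe_smul, Finset.sum_apply,
      Pi.smul_apply, smul_eq_mul, LinearMap.zero_apply] at hgz
    linear_combination hgz
  have hterm : ∀ x ∈ s.erase a, -(g x / g a) * phiM r Δ (a ::ₘ m.erase x) z =
      g x * x z.1 * (-(g a * a z.1)⁻¹ * phiM r Δ m z) := fun x hx => by
    rw [phiM_cons, phiM_erase_apply hm (hs x (Finset.mem_of_mem_erase hx))]
    field_simp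
  simp only [Finset.sum_apply, Pi.smul_apply, smul_eq_mul]
  rw [Finset.sum_congr rfl hterm, ← Finset.sum_mul, hrel]
  field_simp

theorem isOpen_Reg : IsOpen (Reg r Δ) := by
  simp only [Reg, Set.ofPred_forall]
  exact isOpen_biInter_finset fun α _ =>
    isOpen_ne_fun α.continuous_of_finiteDimensional continuous_const

theorem extendFn_phiM_of_mem {m : Multiset (DualV r)} {w : Vc r} (hw : w ∈ Reg r Δ) :
    extendFn r Δ (phiM r Δ m) w = ((m.map fun α => α w).prod)⁻¹ := by
  simp [extendFn, hw, phiM]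

theorem hasDerivAt_extendFn_phiM {m : Multiset (DualV r)} (hm : ∀ α ∈ m, α ∈ Δ) (v : Vc r)
    (z : ↥(Reg r Δ)) :
    HasDerivAt (fun ε : ℂ => extendFn r Δ (phiM r Δ m) (z.1 + ε • v))
      (-(m.map fun α => α v / α z.1).sum * phiM r Δ m z) 0 := by
  have hline : HasDerivAt (fun ε : ℂ => ((m.map fun α => α z.1 + ε * α v).prod)⁻¹)
      (-(m.map fun α => α v / α z.1).sum * phiM r Δ m z) 0 :=
    hasDerivAt_inv_prod_affine m (fun α => α z.1) (fun α => α v) fun α hα => z.2 α (hm α hα)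
  refine hline.congr_of_eventuallyEq ?_
  have hreg : ∀ᶠ ε : ℂ in 𝓝 0, z.1 + ε • v ∈ Reg r Δ :=
    (continuous_const.add (continuous_id.smul continuous_const)).continuousAt.preimage_mem_nhds
      (isOpen_Reg.mem_nhds (by simp))
  filter_upwards [hreg] with ε hε
  simp [extendFn_phiM_of_mem hε]

theorem Dop_phiM {m : Multiset (DualV r)} (hm : ∀ α ∈ m, α ∈ Δ) (v : Vc r) :
    Dop r Δ v (phiM r Δ m) = fun z => -(m.map fun α => α v / α z.1).sum * phiM r Δ m z :=
  funext fun z => (hasDerivAt_extendFn_phiM hm v z).deriv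

theorem Dop_phiM_eq_sum {m : Multiset (DualV r)} (hm : ∀ α ∈ m, α ∈ Δ) (v : Vc r) :
    Dop r Δ v (phiM r Δ m) = -(m.map fun α => α v • phiM r Δ (α ::ₘ m)).sum := by
  rw [Dop_phiM hm]
  funext z
  simp [Pi.multiset_sum_apply, Multiset.map_map, phiM_cons, div_eq_mul_inv, ← mul_assoc,
    Multiset.sum_map_mul_right]

theorem Dop_phiM_of_dual {m : Multiset (DualV r)} (hm : ∀ β ∈ m, β ∈ Δ) {v : Vc r}
    {α : DualV r} (hα : α ∈ m) (hv : ∀ β ∈ m, β v = if β = α then 1 else 0) :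
    Dop r Δ v (phiM r Δ m) = (-(m.count α : ℂ)) • phiM r Δ (α ::ₘ m) := by
  rw [Dop_phiM hm]
  funext z
  have hsum : (m.map fun β => β v / β z.1).sum = m.count α • (α z.1)⁻¹ :=
    (Multiset.sum_map_eq_nsmul_single (f := fun β => β v / β z.1) α fun β hβα hβ => by
      simp [hv β hβ, hβα]).trans (by simp [hv α hα])
  simp [hsum, phiM_cons, mul_assoc]

theorem extendFn_zero : extendFn r Δ 0 = 0 := by
  funext w; simp [extendFn]

theorem extendFn_add (f g : ↥(Reg r Δ) → ℂ) :
    extendFn r Δ (f + g) = extendFn r Δ f + extendFn r Δ g := by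
  funext w; by_cases hw : w ∈ Reg r Δ <;> simp [extendFn, hw]

theorem extendFn_smul (c : ℂ) (f : ↥(Reg r Δ) → ℂ) :
    extendFn r Δ (c • f) = c • extendFn r Δ f := by
  funext w; by_cases hw : w ∈ Reg r Δ <;> simp [extendFn, hw]

/-- `deriv` takes junk values where it is not differentiable, so `Dop r Δ v` is additive only on
functions differentiable along `v`; this submodule carries that differentiability along. -/
def dopPreimage (v : Vc r) (M : Submodule ℂ (↥(Reg r Δ) → ℂ)) :
    Submodule ℂ (↥(Reg r Δ) → ℂ) where
  carrier := {f | (∀ z : ↥(Reg r Δ),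
    DifferentiableAt ℂ (fun ε : ℂ => extendFn r Δ f (z.1 + ε • v)) 0) ∧ Dop r Δ v f ∈ M}
  zero_mem' := by
    refine ⟨fun z => by simp [extendFn_zero], ?_⟩
    have : Dop r Δ v 0 = 0 := by funext z; simp [Dop, extendFn_zero]
    simp [this]
  add_mem' := by
    rintro f g ⟨hf, hfM⟩ ⟨hg, hgM⟩
    have hDop : Dop r Δ v (f + g) = Dop r Δ v f + Dop r Δ v g :=
      funext fun z => by simpa [Dop, extendFn_add] using deriv_fun_add (hf z) (hg z)
    exact ⟨fun z => by simpa [extendFn_add] using (hf z).fun_add (hg z),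
      hDop ▸ M.add_mem hfM hgM⟩
  smul_mem' := by
    rintro c f ⟨hf, hfM⟩
    have hDop : Dop r Δ v (c • f) = c • Dop r Δ v f :=
      funext fun z => by simp [Dop, extendFn_smul, deriv_const_mul c (hf z)]
    exact ⟨fun z => by simp [extendFn_smul, (hf z).const_mul c],
      hDop ▸ M.smul_mem c hfM⟩

theorem Dop_phiM_mem_GΔ {m : Multiset (DualV r)} (hm : IsGenerating r Δ m) (v : Vc r) :
    Dop r Δ v (phiM r Δ m) ∈ GΔ r Δ := by
  rw [Dop_phiM_eq_sum hm.1]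
  refine neg_mem (multiset_sum_mem _ fun g hg => ?_)
  obtain ⟨α, hα, rfl⟩ := Multiset.mem_map.1 hg
  exact Submodule.smul_mem _ _ (phiM_mem_GΔ (hm.cons (hm.1 α hα)))

theorem Dop_mem_GΔ (v : Vc r) {f : ↥(Reg r Δ) → ℂ} (hf : f ∈ GΔ r Δ) :
    Dop r Δ v f ∈ GΔ r Δ := by
  have hle : GΔ r Δ ≤ dopPreimage v (GΔ r Δ) := by
    conv_lhs => rw [GΔ_eq_span_phiM]
    refine Submodule.span_le.2 ?_
    rintro _ ⟨m, hm, rfl⟩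
    exact ⟨fun z => (hasDerivAt_extendFn_phiM hm.1 v z).differentiableAt,
      Dop_phiM_mem_GΔ hm v⟩
  exact (hle hf).2

theorem phiM_mem_of_linearIndepOn (W : Submodule ℂ (↥(Reg r Δ) → ℂ))
    (hW₁ : ∀ σ : Finset (DualV r), IsΔBasis r Δ σ → phiF r Δ σ ∈ W)
    (hW₂ : ∀ (v : Vc r) (f : ↥(Reg r Δ) → ℂ), f ∈ W → Dop r Δ v f ∈ W)
    {m : Multiset (DualV r)} (hm : IsGenerating r Δ m)
    (hind : LinearIndepOn ℂ id {α | α ∈ m}) : phiM r Δ m ∈ W := by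
  induction m using Multiset.strongInductionOn with
  | _ m ih =>
  by_cases hnd : m.Nodup
  · have hcoe : (m.toFinset : Set (DualV r)) = {α | α ∈ m} := by ext; simp
    have hσ : IsΔBasis r Δ m.toFinset := ⟨fun α hα => hm.1 α (Multiset.mem_toFinset.1 hα),
      by rw [hcoe]; exact hind, by rw [hcoe]; exact hm.2⟩
    simpa [phiF_eq_phiM, Multiset.dedup_eq_self.2 hnd] using hW₁ _ hσ
  obtain ⟨α, hα⟩ : ∃ α, 1 < m.count α := by
    simpa [Multiset.nodup_iff_count_le_one] using hnd
  set m' := m.erase α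
  have hαm : α ∈ m := Multiset.count_pos.1 (by omega)
  have hαm' : α ∈ m' := Multiset.count_pos.1 (by simp [m', Multiset.count_erase_self]; omega)
  have hmem : ∀ β, β ∈ m' ↔ β ∈ m := fun β => by
    by_cases hβ : β = α
    · subst hβ; exact ⟨fun _ => hαm, fun _ => hαm'⟩
    · exact Multiset.mem_erase_of_ne hβ
  have hm' : IsGenerating r Δ m' := by simpa [IsGenerating, hmem] using hm
  obtain ⟨v, hv⟩ := exists_dual_apply_eq_ite hind hm.2 hαm
  have hDop := Dop_phiM_of_dual hm'.1 hαm' fun β hβ => hv β ((hmem β).1 hβ)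
  rw [Multiset.cons_erase hαm] at hDop
  have hcount : (m'.count α : ℂ) ≠ 0 := Nat.cast_ne_zero.2 (Multiset.count_ne_zero.2 hαm')
  have hphi : phiM r Δ m = (-(m'.count α : ℂ))⁻¹ • Dop r Δ v (phiM r Δ m') := by
    rw [hDop, smul_smul, inv_mul_cancel₀ (neg_ne_zero.2 hcount), one_smul]
  rw [hphi]
  exact W.smul_mem _ (hW₂ v _ (ih m' (Multiset.erase_lt.2 hαm) hm' (by simpa [hmem] using hind)))

theorem phiM_mem_span_of_not_linearIndepOn {R : DualV r → ℕ} (hR : Set.InjOn R Δ)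
    {m : Multiset (DualV r)} (hm : IsGenerating r Δ m)
    (hdep : ¬LinearIndepOn ℂ id {α | α ∈ m}) :
    phiM r Δ m ∈ Submodule.span ℂ
      {f | ∃ m', IsGenerating r Δ m' ∧ (m'.map R).sum < (m.map R).sum ∧ f = phiM r Δ m'} := by
  have hcoe : (m.toFinset : Set (DualV r)) = {α | α ∈ m} := by ext; simp
  rw [← hcoe, not_linearIndepOn_finset_iff] at hdep
  obtain ⟨g, hg, x₀, hx₀, hgx₀⟩ := hdep
  set s := m.toFinset.filter (g · ≠ 0)
  have hsm : ∀ x ∈ s, x ∈ m := fun x hx => Multiset.mem_toFinset.1 (Finset.mem_filter.1 hx).1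
  have hs : ∑ x ∈ s, g x • x = 0 :=
    (Finset.sum_filter_of_ne (p := (g · ≠ 0)) fun x _ h hgx => h (by simp [hgx])).trans hg
  obtain ⟨a, has, hmin⟩ := s.exists_min_image R ⟨x₀, Finset.mem_filter.2 ⟨hx₀, hgx₀⟩⟩
  rw [phiM_eq_sum_of_relation hm.1 hsm hs has (Finset.mem_filter.1 has).2]
  refine Submodule.sum_mem _ fun x hx => Submodule.smul_mem _ _ (Submodule.subset_span ?_)
  obtain ⟨hxa, hxs⟩ := Finset.mem_erase.1 hx
  refine ⟨_, hm.cons_erase hsm hs hxs (Finset.mem_filter.1 hxs).2 (hsm a has), ?_, rfl⟩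
  have hlt : R a < R x := (hmin x hxs).lt_of_ne fun h =>
    hxa (hR (hm.1 a (hsm a has)) (hm.1 x (hsm x hxs)) h).symm
  have hsum := Multiset.sum_map_erase (f := R) (hsm x hxs)
  simp only [Multiset.map_cons, Multiset.sum_cons]
  omega

theorem phiM_mem_of_isGenerating (W : Submodule ℂ (↥(Reg r Δ) → ℂ))
    (hW₁ : ∀ σ : Finset (DualV r), IsΔBasis r Δ σ → phiF r Δ σ ∈ W)
    (hW₂ : ∀ (v : Vc r) (f : ↥(Reg r Δ) → ℂ), f ∈ W → Dop r Δ v f ∈ W)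
    {m : Multiset (DualV r)} (hm : IsGenerating r Δ m) : phiM r Δ m ∈ W := by
  obtain ⟨R, hR⟩ : ∃ R : DualV r → ℕ, Set.InjOn R Δ :=
    ⟨fun β => Δ.toList.idxOf β, fun β hβ _ _ h => (List.idxOf_inj (Finset.mem_toList.2 hβ)).1 h⟩
  induction hn : (m.map R).sum using Nat.strong_induction_on generalizing m with
  | _ n ih =>
  by_cases hind : LinearIndepOn ℂ id {α | α ∈ m}
  · exact phiM_mem_of_linearIndepOn W hW₁ hW₂ hm hind
  · refine Submodule.span_le.2 ?_ (phiM_mem_span_of_not_linearIndepOn hR hm hind)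
    rintro _ ⟨m', hm', hlt, rfl⟩
    exact ih _ (hn ▸ hlt) hm' rfl

end

theorem stmt1_general (r : ℕ) (Δ : Finset (DualV r)) :
    (∀ σ : Finset (DualV r), IsΔBasis r Δ σ → phiF r Δ σ ∈ GΔ r Δ) ∧
    (∀ (v : Vc r) (f : ↥(Reg r Δ) → ℂ), f ∈ GΔ r Δ → Dop r Δ v f ∈ GΔ r Δ) ∧
    (∀ W : Submodule ℂ (↥(Reg r Δ) → ℂ),
      (∀ σ : Finset (DualV r), IsΔBasis r Δ σ → phiF r Δ σ ∈ W) →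
      (∀ (v : Vc r) (f : ↥(Reg r Δ) → ℂ), f ∈ W → Dop r Δ v f ∈ W) →
      GΔ r Δ ≤ W) := by
  refine ⟨fun σ hσ => phiF_mem_GΔ hσ, fun v f hf => Dop_mem_GΔ v hf, fun W hW₁ hW₂ => ?_⟩
  rw [GΔ_eq_span_phiM, Submodule.span_le]
  rintro _ ⟨m, hm, rfl⟩
  exact phiM_mem_of_isGenerating W hW₁ hW₂ hm

/-- `G_Δ` is the `S(V)`-submodule of `R_Δ` generated by `S_Δ`,
i.e. the smallest linear subspace containing all simple fractions `φ_σ` and stable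
under all directional derivatives `∂(v)`. -/
theorem stmt1 (r : ℕ) (Δ : Finset (DualV r)) (hΔ : ∀ α ∈ Δ, α ≠ 0) :
    (∀ σ : Finset (DualV r), IsΔBasis r Δ σ → phiF r Δ σ ∈ GΔ r Δ) ∧
    (∀ (v : Vc r) (f : ↥(Reg r Δ) → ℂ), f ∈ GΔ r Δ → Dop r Δ v f ∈ GΔ r Δ) ∧
    (∀ W : Submodule ℂ (↥(Reg r Δ) → ℂ),
      (∀ σ : Finset (DualV r), IsΔBasis r Δ σ → phiF r Δ σ ∈ W) →
      (∀ (v : Vc r) (f : ↥(Reg r Δ) → ℂ), f ∈ W → Dop r Δ v f ∈ W) →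
      GΔ r Δ ≤ W) :=
  stmt1_general r Δ
end
end

section
/- Every element of G_Δ is a finite linear combination of functions of the form 1/∏_{α∈σ} α^{n_α}, where σ ranges over the bases of Δ and the exponents n_α are positive integers. -/
open Topology Filter
open scoped Classical

noncomputable section

/-!
Fix an enumeration of `Δ`. If the distinct forms of a generating sequence `κ` are linearly
dependent, choose a relation `β = ∑ c_α α` among them in which `β` has the smallest index.
Dividing `1 = ∑ c_α α / β` by `∏ κ` writes `1/∏ κ` as a combination of the fractions obtained
from `κ` by replacing one `α` with `β`; this keeps the span of `κ` and lowers its total index.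
Once the distinct forms are independent they form a basis `σ` of `Δ`, and `1/∏ κ` is
`1/∏_{α ∈ σ} α^{n_α}` with `n_α` the multiplicity of `α` in `κ`.
-/

section PartialFractions

variable {K E X : Type*} [Field K] [AddCommGroup E] [Module K E]

theorem exists_eq_sum_smul_of_not_linearIndepOn {s : Finset E} {f : E → ℕ}
    (hf : Set.InjOn f s) (h : ¬LinearIndepOn K id (s : Set E)) :
    ∃ β ∈ s, ∃ (u : Finset E) (c : E → K), u ⊆ s ∧ (∀ α ∈ u, c α ≠ 0 ∧ f β < f α) ∧
      ∑ α ∈ u, c α • α = β := by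
  obtain ⟨l, hls, hsum, hl0⟩ := linearDepOn_iff.1 h
  have hsub : l.support ⊆ s := fun γ hγ => (Finsupp.mem_supported K l).1 hls hγ
  obtain ⟨β, hβ, hmin⟩ := l.support.exists_min_image f (Finsupp.support_nonempty_iff.2 hl0)
  have hlβ : l β ≠ 0 := Finsupp.mem_support_iff.1 hβ
  refine ⟨β, hsub hβ, l.support.erase β, fun α => -(l β)⁻¹ * l α,
    (Finset.erase_subset _ _).trans hsub, fun α hα => ⟨?_, ?_⟩, ?_⟩
  · exact mul_ne_zero (neg_ne_zero.2 (inv_ne_zero hlβ))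
      (Finsupp.mem_support_iff.1 (Finset.mem_of_mem_erase hα))
  · refine (hmin α (Finset.mem_of_mem_erase hα)).lt_of_ne fun hfα => ?_
    exact Finset.ne_of_mem_erase hα
      (hf (hsub (Finset.mem_of_mem_erase hα)) (hsub hβ) hfα.symm)
  · rw [← Finset.add_sum_erase _ _ hβ, add_eq_zero_iff_eq_neg'] at hsum
    simp only [id] at hsum
    calc ∑ α ∈ l.support.erase β, (-(l β)⁻¹ * l α) • α
        = -(l β)⁻¹ • ∑ α ∈ l.support.erase β, l α • α := by
          simp_rw [mul_smul, Finset.smul_sum]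
      _ = β := by rw [hsum, smul_neg, neg_smul, neg_neg, inv_smul_smul₀ hlβ]

theorem span_toFinset_cons_erase [DecidableEq E] {M : Multiset E} {u : Finset E} {c : E → K}
    {α β : E} (hβ : β ∈ M) (hα : α ∈ u) (hcα : c α ≠ 0) (hu : ∀ γ ∈ u, γ ∈ M)
    (hrel : ∑ γ ∈ u, c γ • γ = β) :
    Submodule.span K ((β ::ₘ M.erase α).toFinset : Set E) =
      Submodule.span K (M.toFinset : Set E) := by
  set W := Submodule.span K ((β ::ₘ M.erase α).toFinset : Set E)
  have hmem : ∀ γ ∈ M, γ ≠ α → γ ∈ W := fun γ hγ hγα => Submodule.subset_span <| by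
    simp [(Multiset.mem_erase_of_ne hγα).2 hγ]
  refine le_antisymm (Submodule.span_mono fun γ hγ => ?_) (Submodule.span_le.2 fun γ hγ => ?_)
  · simp only [Finset.mem_coe, Multiset.mem_toFinset, Multiset.mem_cons] at hγ ⊢
    exact hγ.elim (· ▸ hβ) Multiset.mem_of_mem_erase
  have hαW : α ∈ W := by
    have hsplit : c α • α = β - ∑ δ ∈ u.erase α, c δ • δ := by
      rw [eq_sub_iff_add_eq, Finset.add_sum_erase _ (fun δ => c δ • δ) hα, hrel]
    have : c α • α ∈ W := hsplit ▸ W.sub_mem (Submodule.subset_span (by simp))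
      (W.sum_mem fun δ hδ => W.smul_mem _ <|
        hmem δ (hu δ (Finset.mem_of_mem_erase hδ)) (Finset.ne_of_mem_erase hδ))
    exact (W.smul_mem_iff hcα).1 this
  obtain rfl | hγα := eq_or_ne γ α
  exacts [hαW, hmem γ (by simpa using hγ) hγα]

variable (ev : X → Module.Dual K E)

def invProd (M : Multiset E) : X → K :=
  fun x => ((M.map (ev x)).prod)⁻¹

theorem invProd_eq_sum_smul_invProd_cons_erase [DecidableEq E] {M : Multiset E}
    {u : Finset E} {c : E → K} {β : E} (hev : ∀ x, ∀ γ ∈ M, ev x γ ≠ 0) (hβ : β ∈ M)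
    (hu : ∀ α ∈ u, α ∈ M) (hrel : ∑ α ∈ u, c α • α = β) :
    invProd ev M = ∑ α ∈ u, c α • invProd ev (β ::ₘ M.erase α) := by
  funext x
  have hP : (M.map (ev x)).prod ≠ 0 := by
    simpa [Multiset.prod_eq_zero_iff] using hev x
  have hterm : ∀ α ∈ u, c α * invProd ev (β ::ₘ M.erase α) x =
      c α * ev x α * ((ev x β)⁻¹ * invProd ev M x) := fun α hα => by
    have hprod := Multiset.prod_map_erase (f := ev x) (hu α hα)
    have hQ : ((M.erase α).map (ev x)).prod ≠ 0 := right_ne_zero_of_mul (hprod ▸ hP)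
    simp only [invProd, Multiset.map_cons, Multiset.prod_cons]
    rw [← hprod]
    field_simp [hev x α (hu α hα), hQ]
  have hβx : ∑ α ∈ u, c α * ev x α = ev x β := by simpa using congrArg (ev x) hrel
  simp only [Finset.sum_apply, Pi.smul_apply, smul_eq_mul]
  rw [Finset.sum_congr rfl hterm, ← Finset.sum_mul, hβx, mul_inv_cancel_left₀ (hev x β hβ)]

def basisFractions (Δ : Finset E) (W : Submodule K E) : Set (X → K) :=
  {g | ∃ (σ : Finset E) (n : E → ℕ),
    (σ ⊆ Δ ∧ LinearIndepOn K id (σ : Set E) ∧ Submodule.span K (σ : Set E) = W) ∧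
      (∀ α ∈ σ, 1 ≤ n α) ∧ g = fun x => (∏ α ∈ σ, ev x α ^ n α)⁻¹}

theorem invProd_mem_span_basisFractions {Δ : Finset E} (hev : ∀ x, ∀ α ∈ Δ, ev x α ≠ 0)
    {M : Multiset E} (hM : ∀ α ∈ M, α ∈ Δ) :
    invProd ev M ∈
      Submodule.span K (basisFractions ev Δ (Submodule.span K (M.toFinset : Set E))) := by
  obtain ⟨idx, hidx⟩ := Set.countable_iff_exists_injOn.1 Δ.countable_toSet
  induction h : (M.map idx).sum using Nat.strong_induction_on generalizing M with
  | _ n ih =>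
  by_cases hli : LinearIndepOn K id (M.toFinset : Set E)
  · refine Submodule.subset_span ⟨M.toFinset, M.count,
      ⟨fun α hα => hM α (Multiset.mem_toFinset.1 hα), hli, rfl⟩,
      fun α hα => Multiset.one_le_count_iff_mem.2 (Multiset.mem_toFinset.1 hα), ?_⟩
    funext x
    rw [invProd, Finset.prod_multiset_map_count]
  obtain ⟨β, hβ, u, c, hus, hu, hrel⟩ := exists_eq_sum_smul_of_not_linearIndepOn
    (hidx.mono fun γ hγ => hM γ (Multiset.mem_toFinset.1 hγ)) hli
  have huM : ∀ α ∈ u, α ∈ M := fun α hα => Multiset.mem_toFinset.1 (hus hα)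
  rw [Multiset.mem_toFinset] at hβ
  rw [invProd_eq_sum_smul_invProd_cons_erase ev (fun x γ hγ => hev x γ (hM γ hγ)) hβ huM hrel]
  refine Submodule.sum_mem _ fun α hα => Submodule.smul_mem _ _ ?_
  rw [← span_toFinset_cons_erase hβ hα (hu α hα).1 huM hrel]
  refine ih _ ?_ (fun γ hγ => ?_) rfl
  · rw [← h, Multiset.map_cons, Multiset.sum_cons, ← Multiset.sum_map_erase (huM α hα)]
    exact Nat.add_lt_add_right (hu α hα).2 _
  · rcases Multiset.mem_cons.1 hγ with rfl | hγ
    exacts [hM _ hβ, hM γ (Multiset.mem_of_mem_erase hγ)]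

end PartialFractions

theorem stmt2_general (r : ℕ) (Δ : Finset (DualV r)) :
    GΔ r Δ ≤ Submodule.span ℂ
      {g : ↥(Reg r Δ) → ℂ | ∃ (σ : Finset (DualV r)) (n : DualV r → ℕ),
        IsΔBasis r Δ σ ∧ (∀ α ∈ σ, 1 ≤ n α) ∧
        g = fun z => (∏ α ∈ σ, (α z.1) ^ (n α))⁻¹} := by
  refine Submodule.span_le.2 ?_
  rintro _ ⟨k, κ, hκΔ, hκ, rfl⟩
  have hspan : Submodule.span ℂ ((Finset.univ.val.map κ).toFinset : Set (DualV r)) = ⊤ := by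
    rw [← hκ]
    congr 1
    ext
    simp
  have hκmem := invProd_mem_span_basisFractions (fun z : Reg r Δ => Module.Dual.eval ℂ (Vc r) z.1)
    (fun z => z.2) (M := Finset.univ.val.map κ) (by simpa using hκΔ)
  have hinv : invProd (fun z : Reg r Δ => Module.Dual.eval ℂ (Vc r) z.1)
      (Finset.univ.val.map κ) = fun z => (∏ i, κ i z.1)⁻¹ := by
    funext z
    simp only [invProd, Multiset.map_map, Finset.prod_map_val]
    rfl
  rw [hspan, hinv] at hκmem
  -- `basisFractions _ Δ ⊤` unfolds to the set on the right-hand side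
  exact hκmem

/-- every element of `G_Δ` is a finite linear combination of functions
`1/∏_{α ∈ σ} α^{n_α}` with `σ` a basis of `Δ` and positive integer exponents `n_α`. -/
theorem stmt2 (r : ℕ) (Δ : Finset (DualV r)) (hΔ : ∀ α ∈ Δ, α ≠ 0) :
    GΔ r Δ ≤ Submodule.span ℂ
      {g : ↥(Reg r Δ) → ℂ | ∃ (σ : Finset (DualV r)) (n : DualV r → ℕ),
        IsΔBasis r Δ σ ∧ (∀ α ∈ σ, 1 ≤ n α) ∧
        g = fun z => (∏ α ∈ σ, (α z.1) ^ (n α))⁻¹} :=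
  stmt2_general r Δ

end
end

section
/- For every z ∈ ℂ with z ∉ 2iπℤ, the following equality of generalized functions of t ∈ ℝ holds: ∑_{n∈ℤ} e^{t(z+2iπn)}/(z+2iπn) = e^{[t]z}/(1−e^{−z}); that is, for every smooth compactly supported function s on ℝ, ∑_{n∈ℤ} (1/(z+2iπn)) ∫_ℝ e^{t(z+2iπn)} s(t) dt = ∫_ℝ (e^{⌊t⌋z}/(1−e^{−z})) s(t) dt, where ⌊t⌋ denotes the integer part of t and the left-hand series converges absolutely. -/
open Topology Filter MeasureTheory

noncomputable section

/-- for `z ∈ ℂ`, `z ∉ 2iπℤ`, one has the equality of generalized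
functions of `t ∈ ℝ`: `∑_{n∈ℤ} e^{t(z+2iπn)}/(z+2iπn) = e^{⌊t⌋z}/(1-e^{-z})`; that is,
for every smooth compactly supported `s` the absolutely convergent series of pairings
equals the pairing of the locally `L¹` right-hand side with `s`. -/
theorem stmt12 (z : ℂ) (hz : ∀ n : ℤ, z ≠ 2 * (Real.pi : ℂ) * Complex.I * n)
    (s : ℝ → ℂ) (hs : ContDiff ℝ (⊤ : ℕ∞) s) (hsc : HasCompactSupport s) :
    Summable (fun n : ℤ => ‖(z + 2 * (Real.pi : ℂ) * Complex.I * n)⁻¹ *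
      ∫ t : ℝ, Complex.exp ((t : ℂ) * (z + 2 * (Real.pi : ℂ) * Complex.I * n)) * s t‖) ∧
    ∑' n : ℤ, (z + 2 * (Real.pi : ℂ) * Complex.I * n)⁻¹ *
      ∫ t : ℝ, Complex.exp ((t : ℂ) * (z + 2 * (Real.pi : ℂ) * Complex.I * n)) * s t =
    ∫ t : ℝ, Complex.exp ((⌊t⌋ : ℂ) * z) / (1 - Complex.exp (-z)) * s t := by
  classical
  haveI : Fact ((0:ℝ) < 1) := ⟨one_pos⟩
  set w : ℤ → ℂ := fun n : ℤ => z + 2 * (Real.pi : ℂ) * Complex.I * n with hwdef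
  have hw : ∀ n : ℤ, w n ≠ 0 := by
    intro n h
    apply hz (-n)
    have h' : z + 2 * (Real.pi : ℂ) * Complex.I * n = 0 := h
    push_cast
    linear_combination h'
  have hper : ∀ n : ℤ, Complex.exp (-(w n)) = Complex.exp (-z) := by
    intro n
    have h1 : -(w n) = -z + (-n : ℤ) * (2 * (Real.pi:ℂ) * Complex.I) := by
      show -(z + 2 * (Real.pi : ℂ) * Complex.I * n) = _
      push_cast
      ring
    rw [h1, Complex.exp_add, Complex.exp_int_mul_two_pi_mul_I, mul_one]
  have hexpz : Complex.exp z ≠ 1 := by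
    intro h
    obtain ⟨n, hn⟩ := Complex.exp_eq_one_iff.mp h
    exact hz n (by rw [hn]; ring)
  have hexpnz : Complex.exp (-z) ≠ 1 := by
    intro h
    obtain ⟨n, hn⟩ := Complex.exp_eq_one_iff.mp h
    apply hz (-n)
    push_cast
    linear_combination -hn
  have hb0 : (1 : ℂ) - Complex.exp (-z) ≠ 0 := sub_ne_zero.mpr (Ne.symm hexpnz)
  have ha0 : Complex.exp z - 1 ≠ 0 := sub_ne_zero.mpr hexpz
  set a : ℂ := (Complex.exp z - 1)⁻¹ with hadef
  set b : ℂ := ((1 : ℂ) - Complex.exp (-z))⁻¹ with hbdef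
  have hab : Complex.exp (-z) * (1 + a) = a := by
    rw [hadef, Complex.exp_neg]
    field_simp
    ring
  -- the sawtooth-type periodic function
  set f₀ : ℝ → ℂ := fun u : ℝ => ((u : ℂ) + a) * Complex.exp (-(u:ℂ) * z) * b with hf0def
  have hf₀c : Continuous f₀ := by fun_prop
  have hf01 : f₀ 0 = f₀ 1 := by
    simp only [hf0def, Complex.ofReal_zero, Complex.ofReal_one, neg_zero, zero_mul,
      Complex.exp_zero, zero_add, mul_one, neg_one_mul]
    rw [show ((1:ℂ)+a) * Complex.exp (-z) = a by linear_combination hab]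
  set p : C(AddCircle (1:ℝ), ℂ) :=
    ⟨AddCircle.liftIco 1 0 f₀, AddCircle.liftIco_zero_continuous (by simpa using hf01)
      hf₀c.continuousOn⟩ with hpdef
  have hpcoe : ⇑p = AddCircle.liftIco 1 0 f₀ := rfl
  -- explicit interval integral (the Fourier coefficient integral)
  have key : ∀ w' : ℂ, w' ≠ 0 → Complex.exp (-w') = Complex.exp (-z) →
      (∫ x in (0:ℝ)..1, (((x:ℝ):ℂ) + a) * Complex.exp (-((x:ℝ):ℂ) * w')) * b = ((w')^2)⁻¹ := by
    intro w' hw' hwz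
    have hΦ : ∀ ζ : ℂ, HasDerivAt (fun ζ : ℂ => Complex.exp (-ζ*w') * (-(ζ+a)/w' - 1/w'^2))
        ((ζ+a) * Complex.exp (-ζ*w')) ζ := by
      intro ζ
      have h1 : HasDerivAt (fun ζ : ℂ => Complex.exp (-ζ*w')) (-w' * Complex.exp (-ζ*w')) ζ := by
        have := ((hasDerivAt_id ζ).neg.mul_const w').cexp
        simp only [Pi.neg_apply] at this
        refine this.congr_deriv ?_; simp only [id]; ring
      have h2 : HasDerivAt (fun ζ : ℂ => -(ζ+a)/w' - 1/w'^2) (-1/w') ζ := by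
        have := (((hasDerivAt_id ζ).add_const a).neg.div_const w').sub_const (1/w'^2)
        simp only [id_eq, Pi.neg_apply] at this
        convert this using 1
      have h3 := h1.mul h2
      refine h3.congr_deriv ?_
      field_simp
      ring
    have h := intervalIntegral.integral_eq_sub_of_hasDerivAt (a := (0:ℝ)) (b := (1:ℝ))
      (f := fun x : ℝ => Complex.exp (-((x:ℝ):ℂ)*w') * (-(((x:ℝ):ℂ)+a)/w' - 1/w'^2))
      (f' := fun x : ℝ => (((x:ℝ):ℂ)+a) * Complex.exp (-((x:ℝ):ℂ)*w'))
      (fun x _ => (hΦ x).comp_ofReal) (by apply Continuous.intervalIntegrable; fun_prop)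
    rw [h]
    push_cast
    rw [neg_one_mul, hwz, hbdef]
    simp only [neg_zero, zero_mul, Complex.exp_zero, one_mul, zero_add]
    field_simp
    linear_combination (-w') * hab
  -- Fourier coefficients of p
  have hcoeff : ∀ n : ℤ, fourierCoeff (⇑p) n = ((w n)^2)⁻¹ := by
    intro n
    rw [hpcoe, fourierCoeff_liftIco_eq f₀ n, fourierCoeffOn_eq_integral]
    have hint : ∀ x : ℝ, fourier (-n) ((x:ℝ) : AddCircle ((0:ℝ)+1-0)) • f₀ x
        = ((((x:ℝ):ℂ) + a) * Complex.exp (-((x:ℝ):ℂ) * (w n))) * b := by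
      intro x
      rw [fourier_coe_apply]
      simp only [smul_eq_mul, hf0def]
      rw [show Complex.exp (-((x:ℝ):ℂ) * w n) =
        Complex.exp (2*(Real.pi:ℂ)*Complex.I*((-n : ℤ):ℂ)*((x:ℝ):ℂ)/((((0:ℝ)+1-0 : ℝ)):ℂ)) *
          Complex.exp (-((x:ℝ):ℂ)*z) from by
          rw [← Complex.exp_add]; congr 1
          show -((x:ℝ):ℂ) * (z + 2 * (Real.pi : ℂ) * Complex.I * n) = _
          push_cast; field_simp; ring]
      ring
    simp only [hint]
    rw [intervalIntegral.integral_mul_const]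
    simp only [zero_add, sub_zero]
    rw [key (w n) (hw n) (hper n)]
    norm_num
  -- summability of the coefficients
  have hWsum : Summable (fun n : ℤ => (‖w n‖^2)⁻¹) := by
    have h2 : Summable (fun n : ℤ => 1/((n:ℝ))^2) := Real.summable_one_div_int_pow.mpr one_lt_two
    apply Summable.of_norm_bounded_eventually h2
    rw [Filter.eventually_cofinite]
    have hgood : ∀ n : ℤ, ‖z‖ + 1 ≤ |(n:ℝ)| → ‖(‖w n‖^2)⁻¹‖ ≤ 1/((n:ℝ))^2 := by
      intro n hn
      have hlow : 2 * Real.pi * |(n:ℝ)| - ‖z‖ ≤ ‖w n‖ := by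
        have h1 : ‖(2 * (Real.pi:ℂ) * Complex.I * n : ℂ)‖ = 2 * Real.pi * |(n:ℝ)| := by
          simp [norm_mul, Complex.norm_intCast, Complex.norm_I,
            Complex.norm_real, _root_.abs_of_nonneg Real.pi_pos.le]
        calc 2 * Real.pi * |(n:ℝ)| - ‖z‖
            = ‖(2 * (Real.pi:ℂ) * Complex.I * n : ℂ)‖ - ‖(-z : ℂ)‖ := by rw [h1, norm_neg]
          _ ≤ ‖(2 * (Real.pi:ℂ) * Complex.I * n : ℂ) - (-z)‖ := norm_sub_norm_le _ _
          _ = ‖w n‖ := by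
              show _ = ‖z + 2 * (Real.pi:ℂ) * Complex.I * n‖
              ring_nf
      have hge : |(n:ℝ)| ≤ ‖w n‖ := by
        have hpi : (2:ℝ) ≤ 2 * Real.pi := by nlinarith [Real.pi_gt_three]
        nlinarith [abs_nonneg ((n:ℝ))]
      have hn0 : (0:ℝ) < |(n:ℝ)| := by linarith [norm_nonneg z]
      rw [Real.norm_eq_abs, abs_of_nonneg (by positivity), one_div]
      apply inv_anti₀ (by nlinarith [sq_abs ((n:ℝ))])
      calc (n:ℝ)^2 = |(n:ℝ)|^2 := (sq_abs _).symm
        _ ≤ ‖w n‖^2 := by nlinarith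
    apply Set.Finite.subset (Set.finite_Icc (-(⌈‖z‖+1⌉)) ⌈‖z‖+1⌉)
    intro n hn
    simp only [Set.mem_setOf_eq] at hn
    have habs : |(n:ℝ)| < ‖z‖ + 1 := by
      by_contra hcon
      exact hn (hgood n (le_of_not_gt hcon))
    have h1 := (abs_lt.mp habs).1
    have h2 := (abs_lt.mp habs).2
    have hc := Int.le_ceil (‖z‖+1)
    constructor
    · have : ((-(⌈‖z‖+1⌉) : ℤ) : ℝ) ≤ (n:ℝ) := by push_cast; linarith
      exact_mod_cast this
    · have : (n:ℝ) ≤ ((⌈‖z‖+1⌉ : ℤ) : ℝ) := by linarith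
      exact_mod_cast this
  have hsumCoeff : Summable (fourierCoeff (⇑p)) := by
    rw [show fourierCoeff (⇑p) = fun n : ℤ => ((w n)^2)⁻¹ from funext hcoeff]
    apply Summable.of_norm
    have : (fun n : ℤ => ‖((w n)^2)⁻¹‖) = fun n : ℤ => (‖w n‖^2)⁻¹ := by
      funext n; simp
    rw [this]
    exact hWsum
  -- the continuous function F and its pointwise Fourier expansion
  set F : ℝ → ℂ := fun t : ℝ => Complex.exp ((t:ℂ) * z) * p ((t:ℝ) : AddCircle (1:ℝ)) with hFdef
  have hFcont : Continuous F := by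
    apply Continuous.mul
    · fun_prop
    · exact (map_continuous p).comp (AddCircle.continuous_mk' (1:ℝ))
  have hFsum : ∀ t : ℝ, HasSum (fun n : ℤ => ((w n)^2)⁻¹ * Complex.exp ((t:ℂ) * w n)) (F t) := by
    intro t
    have h0 := has_pointwise_sum_fourier_series_of_summable hsumCoeff ((t:ℝ) : AddCircle (1:ℝ))
    have h1 := h0.mul_left (Complex.exp ((t:ℂ) * z))
    rw [show (fun n : ℤ => Complex.exp ((t:ℂ)*z) *
        (fourierCoeff (⇑p) n • fourier n ((t:ℝ) : AddCircle (1:ℝ))))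
        = fun n : ℤ => ((w n)^2)⁻¹ * Complex.exp ((t:ℂ) * w n) from funext fun n => by
      rw [hcoeff n, smul_eq_mul, fourier_coe_apply]
      rw [show Complex.exp ((t:ℂ) * w n) = Complex.exp ((t:ℂ)*z) *
          Complex.exp (2*(Real.pi:ℂ)*Complex.I*(n:ℂ)*((t:ℝ):ℂ)/((1:ℝ):ℂ)) from by
        rw [← Complex.exp_add]; congr 1
        show (t:ℂ) * (z + 2 * (Real.pi : ℂ) * Complex.I * n) = _
        push_cast; field_simp]
      ring] at h1
    exact h1
  -- identification of F
  have hfract_coe : ∀ t : ℝ, ((t : ℝ) : AddCircle (1:ℝ)) = ((Int.fract t : ℝ) : AddCircle (1:ℝ)) := by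
    intro t
    have h : Int.fract t = t - (⌊t⌋ : ℝ) := rfl
    rw [h, AddCircle.coe_sub]
    have h2 : ((((⌊t⌋:ℝ)) : ℝ) : AddCircle (1:ℝ)) = 0 := by
      have h3 : ((⌊t⌋:ℝ)) = ⌊t⌋ • (1:ℝ) := by simp
      rw [h3, AddCircle.coe_zsmul, AddCircle.coe_period, smul_zero]
    rw [h2, sub_zero]
  have hFeq : ∀ t : ℝ, F t = Complex.exp ((⌊t⌋:ℂ) * z) * (((Int.fract t : ℝ):ℂ) + a) * b := by
    intro t
    show Complex.exp ((t:ℂ)*z) * p ((t:ℝ) : AddCircle (1:ℝ)) = _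
    rw [hfract_coe t]
    have hp : p (((Int.fract t : ℝ)) : AddCircle (1:ℝ)) = f₀ (Int.fract t) := by
      show AddCircle.liftIco 1 0 f₀ _ = _
      exact AddCircle.liftIco_coe_apply
        (Set.mem_Ico.mpr ⟨Int.fract_nonneg t, by simpa using Int.fract_lt_one t⟩)
    rw [hp]
    show Complex.exp ((t:ℂ)*z) *
      ((((Int.fract t : ℝ):ℂ) + a) * Complex.exp (-((Int.fract t : ℝ):ℂ) * z) * b) = _
    rw [show Complex.exp ((⌊t⌋:ℂ) * z)
        = Complex.exp ((t:ℂ)*z) * Complex.exp (-((Int.fract t : ℝ):ℂ) * z) from by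
      rw [← Complex.exp_add]; congr 1
      have hc : ((⌊t⌋:ℤ):ℂ) = ((t:ℝ):ℂ) - ((Int.fract t : ℝ):ℂ) := by
        rw [← Complex.ofReal_intCast, ← Complex.ofReal_sub]
        norm_cast
        exact (Int.self_sub_fract t).symm
      rw [hc]; ring]
    ring
  -- the step function (right derivative of F)
  set fh : ℝ → ℂ := fun t : ℝ => Complex.exp ((⌊t⌋:ℂ) * z) * b with hfhdef
  have hFderiv : ∀ t : ℝ, HasDerivWithinAt F (fh t) (Set.Ioi t) t := by
    intro t
    have h1 : HasDerivAt (fun u : ℝ => ((u:ℝ):ℂ)) 1 t := by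
      simpa using (hasDerivAt_id t).ofReal_comp
    have hL : HasDerivAt
        (fun u : ℝ => Complex.exp ((⌊t⌋:ℂ)*z) * (((u:ℝ):ℂ) - ((⌊t⌋:ℤ):ℂ) + a) * b) (fh t) t := by
      have h2 := (((h1.sub_const ((⌊t⌋:ℤ):ℂ)).add_const a).const_mul
        (Complex.exp ((⌊t⌋:ℂ)*z))).mul_const b
      refine h2.congr_deriv ?_
      show _ = Complex.exp ((⌊t⌋:ℂ)*z) * b
      ring
    refine hL.hasDerivWithinAt.congr_of_eventuallyEq ?_ ?_
    · filter_upwards [Ioo_mem_nhdsGT_of_mem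
        (Set.mem_Ico.mpr ⟨le_refl t, Int.lt_floor_add_one t⟩)] with u hu
      have hfl : ⌊u⌋ = ⌊t⌋ := by
        rw [Int.floor_eq_iff]
        exact ⟨le_trans (Int.floor_le t) hu.1.le, by exact_mod_cast hu.2⟩
      rw [hFeq u, hfl]
      have hc : ((Int.fract u : ℝ):ℂ) = ((u:ℝ):ℂ) - ((⌊t⌋:ℤ):ℂ) := by
        rw [← hfl, ← Complex.ofReal_intCast, ← Complex.ofReal_sub]
        norm_cast
      rw [hc]
    · rw [hFeq t]
      have hc : ((Int.fract t : ℝ):ℂ) = ((t:ℝ):ℂ) - ((⌊t⌋:ℤ):ℂ) := by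
        rw [← Complex.ofReal_intCast, ← Complex.ofReal_sub]
        norm_cast
      rw [hc]
  -- support bounds
  obtain ⟨R, hR0, hRsupp⟩ : ∃ R : ℝ, 0 < R ∧ tsupport s ⊆ Set.Ioo (-R) R := by
    obtain ⟨r, hr⟩ := hsc.isCompact.isBounded.subset_closedBall 0
    refine ⟨|r| + 1, by positivity, fun x hx => ?_⟩
    have h1 := hr hx
    rw [Metric.mem_closedBall, Real.dist_eq, sub_zero] at h1
    have h2 : |x| ≤ |r| := le_trans h1 (le_abs_self r)
    have := abs_le.mp h2
    exact Set.mem_Ioo.mpr ⟨by linarith, by linarith⟩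
  have hsR : s R = 0 := by
    apply image_eq_zero_of_notMem_tsupport
    intro h
    exact absurd (hRsupp h) (by simp [Set.mem_Ioo])
  have hsnegR : s (-R) = 0 := by
    apply image_eq_zero_of_notMem_tsupport
    intro h
    exact absurd (hRsupp h) (by simp [Set.mem_Ioo])
  have hscont : Continuous s := hs.continuous
  have hs'cont : Continuous (deriv s) := hs.continuous_deriv (by simp)
  have hs'deriv : ∀ t : ℝ, HasDerivAt s (deriv s t) t :=
    fun t => (hs.differentiable (by simp) t).hasDerivAt
  have hssupp : Function.support s ⊆ Set.Ioo (-R) R :=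
    subset_trans (subset_tsupport s) hRsupp
  have hs'supp : Function.support (deriv s) ⊆ Set.Ioo (-R) R :=
    subset_trans (support_deriv_subset) hRsupp
  -- integration by parts
  have keyIBP : ∀ (G g : ℝ → ℂ), Continuous G →
      (∀ t : ℝ, HasDerivWithinAt G (g t) (Set.Ioi t) t) →
      IntervalIntegrable (fun t => g t * s t) volume (-R) R →
      (∫ t : ℝ, G t * deriv s t) = -∫ t : ℝ, g t * s t := by
    intro G g hGc hGd hgi
    have hs'int : IntervalIntegrable (fun t => G t * deriv s t) volume (-R) R :=
      (hGc.mul hs'cont).intervalIntegrable _ _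
    have h0 := intervalIntegral.integral_eq_sub_of_hasDeriv_right_of_le
      (f := fun u => G u * s u) (f' := fun t => g t * s t + G t * deriv s t)
      (by linarith : -R ≤ R)
      ((hGc.mul hscont).continuousOn)
      (fun t _ => (hGd t).mul ((hs'deriv t).hasDerivWithinAt))
      (hgi.add hs'int)
    simp only [hsR, hsnegR, mul_zero, sub_zero] at h0
    rw [intervalIntegral.integral_add hgi hs'int] at h0
    have h2 : ∫ t in (-R)..R, g t * s t = ∫ t : ℝ, g t * s t :=
      intervalIntegral.integral_eq_integral_of_support_subset
        (subset_trans (Function.support_mul_subset_right _ _)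
          (hssupp.trans Set.Ioo_subset_Ioc_self))
    have h3 : ∫ t in (-R)..R, G t * deriv s t = ∫ t : ℝ, G t * deriv s t :=
      intervalIntegral.integral_eq_integral_of_support_subset
        (subset_trans (Function.support_mul_subset_right _ _)
          (hs'supp.trans Set.Ioo_subset_Ioc_self))
    rw [h2, h3] at h0
    linear_combination h0
  -- per-n integration by parts
  have hexpcont : ∀ n : ℤ, Continuous (fun t : ℝ => Complex.exp ((t:ℂ) * w n)) := by
    intro n; fun_prop
  have hIBPn : ∀ n : ℤ, (∫ t : ℝ, Complex.exp ((t:ℂ) * w n) * deriv s t)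
      = -((w n) * ∫ t : ℝ, Complex.exp ((t:ℂ) * w n) * s t) := by
    intro n
    have hGd : ∀ t : ℝ, HasDerivWithinAt (fun u : ℝ => Complex.exp ((u:ℂ) * w n))
        (w n * Complex.exp ((t:ℂ) * w n)) (Set.Ioi t) t := by
      intro t
      have h1 := (((hasDerivAt_id ((t:ℝ):ℂ)).mul_const (w n)).cexp).comp_ofReal
      simp only [id_eq] at h1
      have h2 : Complex.exp ((t:ℂ) * w n) * (1 * w n) = w n * Complex.exp ((t:ℂ) * w n) := by ring
      rw [h2] at h1
      exact h1.hasDerivWithinAt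
    have hgi : IntervalIntegrable (fun t => (w n * Complex.exp ((t:ℂ) * w n)) * s t)
        volume (-R) R := by
      apply Continuous.intervalIntegrable
      exact ((continuous_const.mul (hexpcont n)).mul hscont)
    have h := keyIBP (fun t : ℝ => Complex.exp ((t:ℂ) * w n))
      (fun t : ℝ => w n * Complex.exp ((t:ℂ) * w n)) (hexpcont n) hGd hgi
    rw [h]
    congr 1
    simp_rw [mul_assoc]
    exact integral_const_mul _ _
  have hterm : ∀ n : ℤ, (w n)⁻¹ * (∫ t : ℝ, Complex.exp ((t:ℂ) * w n) * s t)
      = -(((w n)^2)⁻¹ * ∫ t : ℝ, Complex.exp ((t:ℂ) * w n) * deriv s t) := by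
    intro n
    rw [hIBPn n]
    have hwn := hw n
    field_simp
  -- uniform bound for the derivative integrals
  have hnormexp : ∀ (n : ℤ) (t : ℝ), ‖Complex.exp ((t:ℂ) * w n)‖ = Real.exp (t * z.re) := by
    intro n t
    show ‖Complex.exp ((t:ℂ) * (z + 2 * (Real.pi : ℂ) * Complex.I * n))‖ = _
    rw [Complex.norm_exp]
    congr 1
    simp [Complex.mul_re, Complex.add_re, Complex.add_im, Complex.mul_im,
      Complex.I_re, Complex.I_im]
  set C : ℝ := ∫ t : ℝ, Real.exp (t * z.re) * ‖deriv s t‖ with hCdef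
  have hJle : ∀ n : ℤ, ‖∫ t : ℝ, Complex.exp ((t:ℂ) * w n) * deriv s t‖ ≤ C := by
    intro n
    calc ‖∫ t : ℝ, Complex.exp ((t:ℂ) * w n) * deriv s t‖
        ≤ ∫ t : ℝ, ‖Complex.exp ((t:ℂ) * w n) * deriv s t‖ := norm_integral_le_integral_norm _
      _ = C := by rw [hCdef]; congr 1; funext t; rw [norm_mul, hnormexp n t]
  -- Part 1 : summability
  have part1 : Summable (fun n : ℤ =>
      ‖(w n)⁻¹ * ∫ t : ℝ, Complex.exp ((t:ℂ) * w n) * s t‖) := by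
    apply Summable.of_nonneg_of_le (fun n => norm_nonneg _) ?_ (hWsum.mul_right C)
    intro n
    rw [hterm n, norm_neg, norm_mul]
    have h1 : ‖((w n)^2)⁻¹‖ = (‖w n‖^2)⁻¹ := by simp
    rw [h1]
    exact mul_le_mul_of_nonneg_left (hJle n) (by positivity)
  -- integrability of the summands
  have hintn : ∀ n : ℤ, Integrable
      (fun t : ℝ => (-(((w n)^2)⁻¹)) * (Complex.exp ((t:ℂ) * w n) * deriv s t)) := by
    intro n
    apply Integrable.const_mul
    apply Continuous.integrable_of_hasCompactSupport ((hexpcont n).mul hs'cont)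
    exact HasCompactSupport.mul_left hsc.deriv
  have hCnonneg : ∀ n : ℤ, (∫ t : ℝ, ‖(-(((w n)^2)⁻¹)) *
      (Complex.exp ((t:ℂ) * w n) * deriv s t)‖) = (‖w n‖^2)⁻¹ * C := by
    intro n
    have h1 : ∀ t : ℝ, ‖(-(((w n)^2)⁻¹)) * (Complex.exp ((t:ℂ) * w n) * deriv s t)‖
        = (‖w n‖^2)⁻¹ * (Real.exp (t * z.re) * ‖deriv s t‖) := by
      intro t
      rw [norm_mul, norm_mul, hnormexp n t, norm_neg]
      simp
    simp_rw [h1]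
    rw [integral_const_mul]
  have hsumint : Summable (fun n : ℤ => ∫ t : ℝ, ‖(-(((w n)^2)⁻¹)) *
      (Complex.exp ((t:ℂ) * w n) * deriv s t)‖) := by
    simp_rw [hCnonneg]
    exact hWsum.mul_right C
  have hswap := integral_tsum_of_summable_integral_norm hintn hsumint
  -- interval integrability of the step function times s
  have hfhmeas : Measurable fh := by
    apply Measurable.mul_const
    apply Complex.measurable_exp.comp
    exact ((measurable_from_top.comp Int.measurable_floor :
      Measurable fun t : ℝ => ((⌊t⌋:ℤ):ℂ)).mul_const z)
  have hfhsi : IntervalIntegrable (fun t => fh t * s t) volume (-R) R := by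
    obtain ⟨Ms, hMs⟩ := (isCompact_Icc (a := -R) (b := R)).exists_bound_of_continuousOn
      hscont.continuousOn
    rw [intervalIntegrable_iff_integrableOn_Ioc_of_le (by linarith)]
    apply Integrable.mono' (g := fun _ => Real.exp ((R+1)*|z.re|) * ‖b‖ * Ms)
      (integrable_const _)
    · exact ((hfhmeas.mul hscont.measurable).aestronglyMeasurable)
    · refine (ae_restrict_mem measurableSet_Ioc).mono fun t ht => ?_
      have hfl1 : ((⌊t⌋:ℤ):ℝ) ≤ R := le_trans (Int.floor_le t) ht.2
      have hfl2 : -(R+1) ≤ ((⌊t⌋:ℤ):ℝ) := by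
        have := Int.sub_one_lt_floor t
        have := ht.1
        linarith
      have habs : |((⌊t⌋:ℤ):ℝ)| ≤ R + 1 := abs_le.mpr ⟨hfl2, by linarith⟩
      have h1 : ‖fh t‖ = Real.exp (((⌊t⌋:ℤ):ℝ) * z.re) * ‖b‖ := by
        show ‖Complex.exp ((⌊t⌋:ℂ) * z) * b‖ = _
        rw [norm_mul, Complex.norm_exp]
        congr 2
        simp [Complex.mul_re]
      rw [norm_mul, h1]
      have h2 : Real.exp (((⌊t⌋:ℤ):ℝ) * z.re) ≤ Real.exp ((R+1)*|z.re|) := by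
        apply Real.exp_le_exp.mpr
        calc ((⌊t⌋:ℤ):ℝ) * z.re ≤ |((⌊t⌋:ℤ):ℝ) * z.re| := le_abs_self _
          _ = |((⌊t⌋:ℤ):ℝ)| * |z.re| := abs_mul _ _
          _ ≤ (R+1) * |z.re| := by
              apply mul_le_mul_of_nonneg_right habs (abs_nonneg _)
      have h3 : ‖s t‖ ≤ Ms := hMs t (Set.Ioc_subset_Icc_self ht)
      have h4 : (0:ℝ) ≤ Ms := le_trans (norm_nonneg _) h3
      calc Real.exp (((⌊t⌋:ℤ):ℝ) * z.re) * ‖b‖ * ‖s t‖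
          ≤ Real.exp ((R+1)*|z.re|) * ‖b‖ * ‖s t‖ := by
            apply mul_le_mul_of_nonneg_right _ (norm_nonneg _)
            exact mul_le_mul_of_nonneg_right h2 (norm_nonneg _)
        _ ≤ Real.exp ((R+1)*|z.re|) * ‖b‖ * Ms := by
            apply mul_le_mul_of_nonneg_left h3 (by positivity)
  -- Part 2 : the identity
  have hIBPF := keyIBP F fh hFcont hFderiv hfhsi
  have part2 : (∑' n : ℤ, (w n)⁻¹ * ∫ t : ℝ, Complex.exp ((t:ℂ) * w n) * s t)
      = ∫ t : ℝ, fh t * s t := by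
    calc ∑' n : ℤ, (w n)⁻¹ * ∫ t : ℝ, Complex.exp ((t:ℂ) * w n) * s t
        = ∑' n : ℤ, ∫ t : ℝ, (-(((w n)^2)⁻¹)) * (Complex.exp ((t:ℂ) * w n) * deriv s t) := by
          refine tsum_congr fun n => ?_
          rw [hterm n, integral_const_mul, neg_mul]
      _ = ∫ t : ℝ, ∑' n : ℤ, (-(((w n)^2)⁻¹)) * (Complex.exp ((t:ℂ) * w n) * deriv s t) := hswap
      _ = ∫ t : ℝ, (-(F t)) * deriv s t := by
          congr 1
          funext t
          have hsumt := ((hFsum t).neg).mul_right (deriv s t)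
          rw [show (fun n : ℤ => (-(((w n)^2)⁻¹)) * (Complex.exp ((t:ℂ) * w n) * deriv s t))
              = fun n : ℤ => (-(((w n)^2)⁻¹ * Complex.exp ((t:ℂ) * w n))) * deriv s t from
            funext fun n => by ring]
          exact hsumt.tsum_eq
      _ = -(∫ t : ℝ, F t * deriv s t) := by
          simp_rw [neg_mul]
          exact integral_neg _
      _ = ∫ t : ℝ, fh t * s t := by rw [hIBPF, neg_neg]
  constructor
  · exact part1
  · refine part2.trans ?_
    congr 1

end
end

section
/- For every z ∈ ℂ with z ∉ 2iπℤ and every t ∈ ℝ with t ∉ ℤ, the absolutely convergent series satisfies ∑_{n∈ℤ} e^{t(z+2iπn)}/(z+2iπn)² = (t−⌊t⌋)·e^{⌊t⌋z}/(1−e^{−z}) − e^{⌊t⌋z}/((1−e^{−z})(1−e^{z})), where ⌊t⌋ is the integer part of t. -/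
/-!
The function `K z x = (x - (1 - e^z)⁻¹) e^{-xz} / (1 - e^{-z})` takes the same value at `x = 0`
and `x = 1`, and its `n`-th Fourier coefficient on `[0, 1]` is `(z + 2πin)⁻²`, which is absolutely
summable; hence its Fourier series converges to it pointwise. Since
`e^{t(z + 2πin)} = e^{tz} e^{2πin{t}}`, the series of the theorem is `e^{tz}` times this Fourier
series evaluated at the fractional part `{t}`, i.e. `e^{tz} K z {t}`.
-/

open Filter Complex Asymptotics Set
open scoped Real

noncomputable section

lemma isTheta_add_mul_intCast (w : ℂ) {c : ℂ} (hc : c ≠ 0) :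
    (fun n : ℤ ↦ w + c * n) =Θ[cofinite] fun n ↦ (n : ℝ) := by
  simp_rw [add_comm w]
  refine IsTheta.add_isLittleO (Int.cast_complex_isTheta_cast_real.const_mul_left hc) ?_
  simpa [-Int.cofinite_eq] using
    .inr <| tendsto_norm_comp_cofinite_atTop_of_isClosedEmbedding Int.isClosedEmbedding_coe_real

lemma summable_norm_inv_add_mul_intCast_sq (w : ℂ) {c : ℂ} (hc : c ≠ 0) :
    Summable fun n : ℤ ↦ ‖((w + c * n) ^ 2)⁻¹‖ :=
  summable_of_isBigO' (Real.summable_one_div_int_pow.mpr one_lt_two)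
    (by simpa only [one_div] using ((isTheta_add_mul_intCast w hc).pow 2).inv.isBigO.norm_left)

theorem hasSum_fourier_series_of_continuousOn {g : ℝ → ℂ} (hg : ContinuousOn g (Icc 0 1))
    (hg01 : g 0 = g 1) {c : ℤ → ℂ}
    (hc : ∀ n : ℤ, ∫ x in (0 : ℝ)..1, exp (-(2 * π * I * n * x)) * g x = c n)
    (hs : Summable c) {x : ℝ} (hx : x ∈ Ico 0 1) :
    HasSum (fun n : ℤ ↦ c n * exp (2 * π * I * n * x)) (g x) := by
  have : Fact ((0 : ℝ) < 1) := ⟨one_pos⟩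
  have hcoeff : fourierCoeff (AddCircle.liftIco 1 0 g) = c := by
    ext n
    rw [← hc, fourierCoeff_liftIco_eq, fourierCoeffOn_eq_integral]
    simp only [fourier_coe_apply, zero_add, sub_zero, div_one, one_smul, smul_eq_mul,
      Int.cast_neg, ofReal_one, mul_neg, neg_mul]
  have := has_pointwise_sum_fourier_series_of_summable
    (f := ⟨_, AddCircle.liftIco_zero_continuous hg01 hg⟩) (hcoeff ▸ hs) (x : AddCircle (1 : ℝ))
  simpa [hcoeff, fourier_coe_apply, AddCircle.liftIco_zero_coe_apply hx] using this

lemma cexp_add_two_pi_I_mul_intCast (z : ℂ) (n : ℤ) : exp (z + 2 * π * I * n) = exp z := by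
  simpa [mul_comm] using (exp_periodic.int_mul n) z

lemma add_two_pi_I_mul_intCast_ne_zero {z : ℂ} (hz : exp z ≠ 1) (n : ℤ) :
    z + 2 * π * I * n ≠ 0 := fun h ↦ hz <| by
  rw [← cexp_add_two_pi_I_mul_intCast z n, h, exp_zero]

lemma cexp_ofReal_mul_add_two_pi_I_mul_intCast (z : ℂ) (t : ℝ) (n : ℤ) :
    exp (t * (z + 2 * π * I * n)) = exp (t * z) * exp (2 * π * I * n * Int.fract t) := by
  rw [← exp_add, ← cexp_add_two_pi_I_mul_intCast (t * z + _) (n * ⌊t⌋)]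
  congr 1
  rw [Int.fract]
  push_cast
  ring

lemma norm_cexp_two_pi_I_mul_intCast_mul_ofReal (n : ℤ) (s : ℝ) :
    ‖exp (2 * π * I * n * s)‖ = 1 := by
  rw [show 2 * π * I * n * s = ((2 * π * n * s : ℝ) : ℂ) * I by push_cast; ring]
  exact norm_exp_ofReal_mul_I _

lemma hasDerivAt_sub_mul_cexp_neg_mul (C w : ℂ) (hw : w ≠ 0) (y : ℝ) :
    HasDerivAt (fun x : ℝ ↦ (-(x - C) / w - 1 / w ^ 2) * exp (-(x * w)))
      ((y - C) * exp (-(y * w))) y := by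
  have hlin : HasDerivAt (fun x : ℂ ↦ -(x - C) / w - 1 / w ^ 2) (-1 / w) y := by
    simpa using (((hasDerivAt_id (y : ℂ)).sub_const C).neg.div_const w).sub_const (1 / w ^ 2)
  have hexp : HasDerivAt (fun x : ℂ ↦ exp (-(x * w))) (exp (-(y * w)) * -w) y := by
    simpa using ((hasDerivAt_id (y : ℂ)).mul_const w).neg.cexp
  refine ((hlin.mul hexp).congr_deriv ?_).comp_ofReal
  field_simp
  ring

lemma integral_sub_mul_cexp_neg_mul (C w : ℂ) (hw : w ≠ 0) :
    ∫ x in (0 : ℝ)..1, (x - C) * exp (-(x * w)) =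
      (-(1 - C) / w - 1 / w ^ 2) * exp (-w) - C / w + 1 / w ^ 2 := by
  rw [intervalIntegral.integral_eq_sub_of_hasDerivAt
    (fun x _ ↦ hasDerivAt_sub_mul_cexp_neg_mul C w hw x)
    (by apply Continuous.intervalIntegrable; fun_prop)]
  simp only [ofReal_one, ofReal_zero, one_mul, zero_mul, neg_zero, exp_zero, mul_one, zero_sub]
  ring

def invSqKernel (z : ℂ) (x : ℝ) : ℂ :=
  (x - (1 - exp z)⁻¹) * exp (-(x * z)) / (1 - exp (-z))

lemma continuous_invSqKernel (z : ℂ) : Continuous (invSqKernel z) := by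
  unfold invSqKernel
  fun_prop

lemma invSqKernel_zero_eq_one {z : ℂ} (hz : exp z ≠ 1) : invSqKernel z 0 = invSqKernel z 1 := by
  have h1 : 1 - exp z ≠ 0 := sub_ne_zero.mpr hz.symm
  simp only [invSqKernel, ofReal_zero, ofReal_one, zero_mul, neg_zero, exp_zero, one_mul, exp_neg]
  field_simp
  ring

lemma integral_cexp_mul_invSqKernel {z : ℂ} (hz : exp z ≠ 1) (n : ℤ) :
    ∫ x in (0 : ℝ)..1, exp (-(2 * π * I * n * x)) * invSqKernel z x =
      ((z + 2 * π * I * n) ^ 2)⁻¹ := by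
  have hw := add_two_pi_I_mul_intCast_ne_zero hz n
  have h1 : 1 - exp z ≠ 0 := sub_ne_zero.mpr hz.symm
  have hint (x : ℝ) : exp (-(2 * π * I * n * x)) * invSqKernel z x =
      (x - (1 - exp z)⁻¹) * exp (-(x * (z + 2 * π * I * n))) / (1 - exp (-z)) := by
    rw [invSqKernel, mul_div_assoc', mul_left_comm, ← exp_add]
    ring_nf
  simp_rw [hint, intervalIntegral.integral_div, integral_sub_mul_cexp_neg_mul _ _ hw]
  rw [exp_neg (z + _), cexp_add_two_pi_I_mul_intCast, exp_neg]
  field_simp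
  ring

lemma hasSum_inv_sq_mul_cexp_eq_invSqKernel {z : ℂ} (hz : exp z ≠ 1) {x : ℝ}
    (hx : x ∈ Ico 0 1) :
    HasSum (fun n : ℤ ↦ ((z + 2 * π * I * n) ^ 2)⁻¹ * exp (2 * π * I * n * x))
      (invSqKernel z x) :=
  hasSum_fourier_series_of_continuousOn (continuous_invSqKernel z).continuousOn
    (invSqKernel_zero_eq_one hz) (integral_cexp_mul_invSqKernel hz)
    (summable_norm_inv_add_mul_intCast_sq z two_pi_I_ne_zero).of_norm hx

lemma cexp_mul_invSqKernel_fract (z : ℂ) (t : ℝ) :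
    exp (t * z) * invSqKernel z (Int.fract t) =
      (t - ⌊t⌋) * exp (⌊t⌋ * z) / (1 - exp (-z)) -
        exp (⌊t⌋ * z) / ((1 - exp (-z)) * (1 - exp z)) := by
  have hfloor : exp (t * z) * exp (-((t - ⌊t⌋ : ℝ) * z)) = exp (⌊t⌋ * z) := by
    rw [← exp_add]
    push_cast
    ring_nf
  rw [invSqKernel, Int.fract, div_mul_eq_div_div]
  push_cast at hfloor ⊢
  linear_combination ((t - ⌊t⌋) - (1 - exp z)⁻¹) / (1 - exp (-z)) * hfloor

theorem stmt13_general (z : ℂ) (hz : ∀ n : ℤ, z ≠ 2 * (Real.pi : ℂ) * Complex.I * n)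
    (t : ℝ) :
    Summable (fun n : ℤ => ‖Complex.exp ((t : ℂ) * (z + 2 * (Real.pi : ℂ) * Complex.I * n)) /
      (z + 2 * (Real.pi : ℂ) * Complex.I * n) ^ 2‖) ∧
    ∑' n : ℤ, Complex.exp ((t : ℂ) * (z + 2 * (Real.pi : ℂ) * Complex.I * n)) /
      (z + 2 * (Real.pi : ℂ) * Complex.I * n) ^ 2 =
    ((t : ℂ) - (⌊t⌋ : ℂ)) * Complex.exp ((⌊t⌋ : ℂ) * z) / (1 - Complex.exp (-z)) -
      Complex.exp ((⌊t⌋ : ℂ) * z) / ((1 - Complex.exp (-z)) * (1 - Complex.exp z)) := by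
  have hexp : exp z ≠ 1 := fun h ↦ by
    obtain ⟨n, hn⟩ := exp_eq_one_iff.mp h
    exact hz n (by rw [hn]; ring)
  have hterm (n : ℤ) : exp (t * (z + 2 * π * I * n)) / (z + 2 * π * I * n) ^ 2 =
      exp (t * z) * (((z + 2 * π * I * n) ^ 2)⁻¹ * exp (2 * π * I * n * Int.fract t)) := by
    rw [cexp_ofReal_mul_add_two_pi_I_mul_intCast]
    ring
  simp_rw [hterm]
  refine ⟨?_, ?_⟩
  · simpa [norm_cexp_two_pi_I_mul_intCast_mul_ofReal] using
      (summable_norm_inv_add_mul_intCast_sq z two_pi_I_ne_zero).mul_left ‖exp (t * z)‖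
  · rw [((hasSum_inv_sq_mul_cexp_eq_invSqKernel hexp
      ⟨Int.fract_nonneg t, Int.fract_lt_one t⟩).mul_left _).tsum_eq]
    exact cexp_mul_invSqKernel_fract z t

/-- for `z ∉ 2iπℤ` and `t ∈ ℝ ∖ ℤ`, the absolutely convergent
series satisfies
`∑_{n∈ℤ} e^{t(z+2iπn)}/(z+2iπn)² = (t-⌊t⌋)e^{⌊t⌋z}/(1-e^{-z}) - e^{⌊t⌋z}/((1-e^{-z})(1-e^{z}))`. -/
theorem stmt13 (z : ℂ) (hz : ∀ n : ℤ, z ≠ 2 * (Real.pi : ℂ) * Complex.I * n)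
    (t : ℝ) (ht : ∀ n : ℤ, t ≠ (n : ℝ)) :
    Summable (fun n : ℤ => ‖Complex.exp ((t : ℂ) * (z + 2 * (Real.pi : ℂ) * Complex.I * n)) /
      (z + 2 * (Real.pi : ℂ) * Complex.I * n) ^ 2‖) ∧
    ∑' n : ℤ, Complex.exp ((t : ℂ) * (z + 2 * (Real.pi : ℂ) * Complex.I * n)) /
      (z + 2 * (Real.pi : ℂ) * Complex.I * n) ^ 2 =
    ((t : ℂ) - (⌊t⌋ : ℂ)) * Complex.exp ((⌊t⌋ : ℂ) * z) / (1 - Complex.exp (-z)) -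
      Complex.exp ((⌊t⌋ : ℂ) * z) / ((1 - Complex.exp (-z)) * (1 - Complex.exp z)) :=
  stmt13_general z hz t

end
end
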